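/- Let d = 1 and α ∈ (0,2). Let μ be a bounded probability density on ℝ and let (P_u)_{u>0} be a family of Markov kernels on ℝ such that: (i) the measure μ(x)dx is invariant for every P_u; (ii) ‖P_u f‖_{L²(μ)} ≤ ‖f‖_{L²(μ)} for every f ∈ L²(μ) and u > 0; (iii) for every u ∈ (0,1], P_u(x,·) has a density p_u(x,·) with respect to Lebesgue measure satisfying p_u(x,y) ≤ c₀ (u^{−1/2} e^{−λ₀|y−x|²/u} + u/(u^{1/2} + |y−x|)^{1+α}) for all x, y, with constants c₀, λ₀ > 0; (iv) for every u ≥ 1, P_u(x,·) has a density bounded by a constant c₀′; (v) there exist c > 0, ρ > 0 such that ∫_ℝ |P_u g(x) − ∫ g μ dx| μ(x) dx ≤ c e^{−ρu} ‖g‖_∞ for every bounded measurable g and u > 0. Then there is a constant C, independent of f and T, such that for every T > 0 and every bounded measurable f : ℝ → ℝ whose support S has Lebesgue measure |S| < 1: 2 ∫_0^T (T−u) |⟨P_u f, f⟩_μ − (∫ f μ dx)²| du ≤ C T ‖f‖_∞² |S|² (1 + (log(1/|S|))^{2−(1+α)/2} + log(1/|S|)). -/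

import Mathlib

/-!
Write `D u = |⟨P_u f, f⟩_μ - (∫ f μ)²|` and `s = |supp f|`. If `P_u` has a transition density
bounded by `B`, then `|P_u f| ≤ B ‖f‖_∞ s` pointwise, and integrating against `f μ` over the
support gives `D u ≤ (B ‖μ‖_∞ + ‖μ‖_∞²) ‖f‖_∞² s²`. The small-time bound gives `B ≲ u^(-1/2)`,
which is integrable at `0`, and for `u ≥ 1` the density is bounded by `c₀'`. Ergodicity gives
`D u ≤ c e^(-ρu) ‖f‖_∞²` instead. Bounding `T - u` by `T`, we use the density bounds up to
`δ = 1 + (2/ρ) log(1/s)` and ergodicity after `δ`, where `e^(-ρδ) ≤ s²`; the integral is then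
`O(T ‖f‖_∞² s² (1 + log(1/s)))`.
-/

open MeasureTheory ProbabilityTheory Real
open Set Function

section

variable {α : Type*} [MeasurableSpace α] {ν : Measure α}

theorem abs_integral_le_of_forall_notMem_eq_zero {S : Set α} {w : α → ℝ} {A : ℝ}
    (hS : ν S < ⊤) (hw : ∀ x, x ∉ S → w x = 0) (hA : ∀ x ∈ S, |w x| ≤ A) :
    |∫ x, w x ∂ν| ≤ A * ν.real S := by
  rw [← setIntegral_eq_integral_of_forall_compl_eq_zero hw]
  exact norm_setIntegral_le_of_norm_le_const hS fun x hx =>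
    (Real.norm_eq_abs _).trans_le (hA x hx)

theorem abs_integral_mul_le {f μ : α → ℝ} {M Cμ : ℝ} (hf : ∀ x, |f x| ≤ M)
    (hμ0 : ∀ x, 0 ≤ μ x) (hμ : ∀ x, μ x ≤ Cμ) (hS : ν (support f) < ⊤) :
    |∫ x, f x * μ x ∂ν| ≤ M * Cμ * ν.real (support f) := by
  refine abs_integral_le_of_forall_notMem_eq_zero hS
    (fun x hx => by rw [notMem_support.mp hx, zero_mul]) fun x _ => ?_
  rw [abs_mul, abs_of_nonneg (hμ0 x)]
  exact mul_le_mul (hf x) (hμ x) (hμ0 x) ((abs_nonneg _).trans (hf x))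

theorem abs_integral_withDensity_le {p f : α → ℝ} {B M : ℝ} (hp : Measurable p)
    (hpB : ∀ y, 0 ≤ p y ∧ p y ≤ B) (hf : ∀ y, |f y| ≤ M) (hS : ν (support f) < ⊤) :
    |∫ y, f y ∂ν.withDensity (fun y => ENNReal.ofReal (p y))| ≤ B * M * ν.real (support f) := by
  rw [integral_withDensity_eq_integral_toReal_smul hp.ennreal_ofReal
    (ae_of_all _ fun _ => ENNReal.ofReal_lt_top)]
  refine abs_integral_le_of_forall_notMem_eq_zero hS
    (fun y hy => by rw [notMem_support.mp hy, smul_zero]) fun y _ => ?_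
  rw [smul_eq_mul, abs_mul, ENNReal.toReal_ofReal (hpB y).1, abs_of_nonneg (hpB y).1]
  exact mul_le_mul (hpB y).2 (hf y) (abs_nonneg _) ((hpB y).1.trans (hpB y).2)

theorem abs_integral_integral_mul_le_of_density_le {κ : α → Measure α} {f μ : α → ℝ}
    {B M Cμ : ℝ} (hκ : ∀ x, ∃ p : α → ℝ, Measurable p ∧ (∀ y, 0 ≤ p y ∧ p y ≤ B) ∧
      κ x = ν.withDensity (fun y => ENNReal.ofReal (p y)))
    (hf : ∀ x, |f x| ≤ M) (hμ0 : ∀ x, 0 ≤ μ x) (hμ : ∀ x, μ x ≤ Cμ)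
    (hS : ν (support f) < ⊤) :
    |∫ x, (∫ y, f y ∂κ x) * f x * μ x ∂ν| ≤ B * M ^ 2 * Cμ * ν.real (support f) ^ 2 := by
  have hκf : ∀ x, |∫ y, f y ∂κ x| ≤ B * M * ν.real (support f) := fun x => by
    obtain ⟨p, hp, hpB, hκx⟩ := hκ x
    rw [hκx]
    exact abs_integral_withDensity_le hp hpB hf hS
  calc |∫ x, (∫ y, f y ∂κ x) * f x * μ x ∂ν|
      ≤ (B * M * ν.real (support f) * M) * Cμ * ν.real (support f) := by
        refine abs_integral_le_of_forall_notMem_eq_zero hS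
          (fun x hx => by rw [notMem_support.mp hx, mul_zero, zero_mul]) fun x _ => ?_
        rw [abs_mul, abs_mul, abs_of_nonneg (hμ0 x)]
        have hBMs : 0 ≤ B * M * ν.real (support f) := (abs_nonneg _).trans (hκf x)
        exact mul_le_mul (mul_le_mul (hκf x) (hf x) (abs_nonneg _) hBMs) (hμ x) (hμ0 x)
          (mul_nonneg hBMs ((abs_nonneg _).trans (hf x)))
    _ = B * M ^ 2 * Cμ * ν.real (support f) ^ 2 := by ring

theorem abs_integral_integral_mul_sub_sq_le_of_density_le {κ : α → Measure α} {f μ : α → ℝ}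
    {B M Cμ : ℝ} (hκ : ∀ x, ∃ p : α → ℝ, Measurable p ∧ (∀ y, 0 ≤ p y ∧ p y ≤ B) ∧
      κ x = ν.withDensity (fun y => ENNReal.ofReal (p y)))
    (hf : ∀ x, |f x| ≤ M) (hμ0 : ∀ x, 0 ≤ μ x) (hμ : ∀ x, μ x ≤ Cμ)
    (hS : ν (support f) < ⊤) :
    |∫ x, (∫ y, f y ∂κ x) * f x * μ x ∂ν - (∫ x, f x * μ x ∂ν) ^ 2|
      ≤ (B * Cμ + Cμ ^ 2) * M ^ 2 * ν.real (support f) ^ 2 := by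
  have hmean : (∫ x, f x * μ x ∂ν) ^ 2 ≤ (M * Cμ * ν.real (support f)) ^ 2 :=
    (sq_abs _).symm.trans_le
      (pow_le_pow_left₀ (abs_nonneg _) (abs_integral_mul_le hf hμ0 hμ hS) 2)
  calc _ ≤ |∫ x, (∫ y, f y ∂κ x) * f x * μ x ∂ν| + (∫ x, f x * μ x ∂ν) ^ 2 :=
        (abs_sub _ _).trans_eq (by rw [abs_of_nonneg (sq_nonneg (∫ x, f x * μ x ∂ν))])
    _ ≤ B * M ^ 2 * Cμ * ν.real (support f) ^ 2 + (M * Cμ * ν.real (support f)) ^ 2 :=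
        add_le_add (abs_integral_integral_mul_le_of_density_le hκ hf hμ0 hμ hS) hmean
    _ = (B * Cμ + Cμ ^ 2) * M ^ 2 * ν.real (support f) ^ 2 := by ring

theorem abs_integral_kernel_mul_sub_sq_le {κ : Kernel α α} [IsMarkovKernel κ] {f μ : α → ℝ}
    {M : ℝ} (hf : Measurable f) (hfM : ∀ x, |f x| ≤ M) (hμ0 : ∀ x, 0 ≤ μ x)
    (hμi : Integrable μ ν) :
    |∫ x, (∫ y, f y ∂κ x) * f x * μ x ∂ν - (∫ x, f x * μ x ∂ν) ^ 2|
      ≤ M * ∫ x, |(∫ y, f y ∂κ x) - ∫ z, f z * μ z ∂ν| * μ x ∂ν := by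
  set m := ∫ z, f z * μ z ∂ν
  set g : α → ℝ := fun x => ∫ y, f y ∂κ x
  have hg : Measurable g := (hf.stronglyMeasurable.integral_kernel (κ := κ)).measurable
  have hgM : ∀ x, ‖g x‖ ≤ M := fun x => by
    simpa using norm_integral_le_of_norm_le_const (μ := κ x)
      (ae_of_all _ fun y => (Real.norm_eq_abs _).trans_le (hfM y))
  have hfμ : Integrable (fun x => f x * μ x) ν :=
    hμi.bdd_mul hf.aestronglyMeasurable
      (ae_of_all _ fun x => (Real.norm_eq_abs _).trans_le (hfM x))
  have hgfμ : Integrable (fun x => g x * (f x * μ x)) ν :=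
    hfμ.bdd_mul hg.aestronglyMeasurable (ae_of_all _ hgM)
  have hcentered : ∫ x, g x * f x * μ x ∂ν - m ^ 2 = ∫ x, (g x - m) * (f x * μ x) ∂ν := by
    simp only [sub_mul, mul_assoc]
    rw [integral_sub hgfμ (hfμ.const_mul m), integral_const_mul, sq]
  have hdist : Integrable (fun x => M * (|g x - m| * μ x)) ν := by
    refine (hμi.bdd_mul ((hg.sub_const m).abs).aestronglyMeasurable
      (c := M + |m|) (ae_of_all _ fun x => ?_)).const_mul M
    rw [Real.norm_eq_abs, abs_abs]
    exact (abs_sub _ _).trans (add_le_add_left ((Real.norm_eq_abs _).symm.trans_le (hgM x)) _)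
  rw [hcentered, ← integral_const_mul, ← Real.norm_eq_abs]
  refine norm_integral_le_of_norm_le hdist (ae_of_all _ fun x => ?_)
  rw [Real.norm_eq_abs, abs_mul, abs_mul, abs_of_nonneg (hμ0 x), mul_left_comm]
  exact mul_le_mul_of_nonneg_right (hfM x) (mul_nonneg (abs_nonneg _) (hμ0 x))

end

theorem div_sqrt_add_rpow_le {u r α : ℝ} (hu : 0 < u) (hu1 : u ≤ 1) (hr : 0 ≤ r)
    (hα0 : 0 ≤ 1 + α) (hα2 : α ≤ 2) :
    u / (√u + r) ^ (1 + α) ≤ u ^ (-(1 : ℝ) / 2) := by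
  have hsqrt : √u ^ (1 + α) = u ^ ((1 + α) / 2) := by
    rw [sqrt_eq_rpow, ← rpow_mul hu.le]
    ring_nf
  calc u / (√u + r) ^ (1 + α) ≤ u / √u ^ (1 + α) :=
        div_le_div_of_nonneg_left hu.le (rpow_pos_of_pos (sqrt_pos.mpr hu) _)
          (rpow_le_rpow (sqrt_nonneg u) (le_add_of_nonneg_right hr) hα0)
    _ = u ^ (1 - (1 + α) / 2) := by rw [hsqrt, rpow_sub hu, rpow_one]
    _ ≤ u ^ (-(1 : ℝ) / 2) := rpow_le_rpow_of_exponent_ge hu hu1 (by linarith)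

theorem gaussian_add_stable_bound_le {u r α c₀ lam₀ : ℝ} (hu : 0 < u) (hu1 : u ≤ 1)
    (hr : 0 ≤ r) (hα0 : 0 ≤ 1 + α) (hα2 : α ≤ 2) (hc₀ : 0 ≤ c₀) (hlam₀ : 0 ≤ lam₀) :
    c₀ * (u ^ (-(1 : ℝ) / 2) * exp (-lam₀ * r ^ 2 / u) + u / (√u + r) ^ (1 + α))
      ≤ 2 * c₀ * u ^ (-(1 : ℝ) / 2) := by
  have hexp : exp (-lam₀ * r ^ 2 / u) ≤ 1 :=
    exp_le_one_iff.mpr (div_nonpos_of_nonpos_of_nonneg (by nlinarith [sq_nonneg r]) hu.le)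
  calc c₀ * (u ^ (-(1 : ℝ) / 2) * exp (-lam₀ * r ^ 2 / u) + u / (√u + r) ^ (1 + α))
      ≤ c₀ * (u ^ (-(1 : ℝ) / 2) * 1 + u ^ (-(1 : ℝ) / 2)) := by
        gcongr
        exact div_sqrt_add_rpow_le hu hu1 hr hα0 hα2
    _ = 2 * c₀ * u ^ (-(1 : ℝ) / 2) := by ring

theorem integral_Ioc_rpow_neg_half_add (a b : ℝ) :
    ∫ u in Ioc (0 : ℝ) 1, (a * u ^ (-(1 : ℝ) / 2) + b) = 2 * a + b := by
  rw [← intervalIntegral.integral_of_le zero_le_one, intervalIntegral.integral_add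
    ((intervalIntegral.intervalIntegrable_rpow' (by norm_num)).const_mul a)
    intervalIntegrable_const, intervalIntegral.integral_const_mul,
    integral_rpow (Or.inl (by norm_num))]
  norm_num
  ring

noncomputable def regimeMajorant (a b b' E ρ δ : ℝ) : ℝ → ℝ :=
  (Ioc 0 1).indicator (fun u => a * u ^ (-(1 : ℝ) / 2) + b) + (Ioc 1 δ).indicator (fun _ => b')
    + (Ioi δ).indicator (fun u => E * exp (-ρ * u))

section regimeMajorant

variable {D : ℝ → ℝ} {a b b' E ρ δ : ℝ}

theorem le_regimeMajorant (hδ : 1 ≤ δ)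
    (hsmall : ∀ u ∈ Ioc 0 1, D u ≤ a * u ^ (-(1 : ℝ) / 2) + b)
    (hlarge : ∀ u ∈ Ioc 1 δ, D u ≤ b') (htail : ∀ u ∈ Ioi δ, D u ≤ E * exp (-ρ * u))
    {u : ℝ} (hu : 0 < u) : D u ≤ regimeMajorant a b b' E ρ δ u := by
  rcases le_or_gt u 1 with hu1 | hu1
  · have h2 : u ∉ Ioc 1 δ := fun h => by linarith [h.1]
    have h3 : u ∉ Ioi δ := fun h => by linarith [mem_Ioi.mp h]
    simpa [regimeMajorant, indicator_of_mem (show u ∈ Ioc 0 1 from ⟨hu, hu1⟩), h2, h3]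
      using hsmall u ⟨hu, hu1⟩
  have h1 : u ∉ Ioc 0 1 := fun h => by linarith [h.2]
  rcases le_or_gt u δ with huδ | huδ
  · have h3 : u ∉ Ioi δ := fun h => by linarith [mem_Ioi.mp h]
    simpa [regimeMajorant, indicator_of_mem (show u ∈ Ioc 1 δ from ⟨hu1, huδ⟩), h1, h3]
      using hlarge u ⟨hu1, huδ⟩
  · have h2 : u ∉ Ioc 1 δ := fun h => by linarith [h.2]
    simpa [regimeMajorant, indicator_of_mem (show u ∈ Ioi δ from huδ), h1, h2]
      using htail u huδ

theorem regimeMajorant_eq_zero_of_nonpos (hδ : 0 ≤ δ) {u : ℝ} (hu : u ≤ 0) :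
    regimeMajorant a b b' E ρ δ u = 0 := by
  have h1 : u ∉ Ioc 1 δ := fun h => by linarith [h.1]
  have h2 : u ∉ Ioi δ := fun h => by linarith [mem_Ioi.mp h]
  simp [regimeMajorant, h1, h2, hu]

theorem integrable_regimeMajorant_and_integral (hρ : 0 < ρ) (hδ : 1 ≤ δ) :
    Integrable (regimeMajorant a b b' E ρ δ) ∧
      ∫ u, regimeMajorant a b b' E ρ δ u = 2 * a + b + b' * (δ - 1) + E * exp (-ρ * δ) / ρ := by
  have hI₁ : Integrable ((Ioc 0 1).indicator (fun u => a * u ^ (-(1 : ℝ) / 2) + b)) :=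
    IntegrableOn.integrable_indicator (((intervalIntegral.intervalIntegrable_rpow'
      (by norm_num)).const_mul a).add intervalIntegrable_const).1 measurableSet_Ioc
  have hI₂ : Integrable ((Ioc 1 δ).indicator (fun _ => b')) :=
    (integrableOn_const measure_Ioc_lt_top.ne).integrable_indicator measurableSet_Ioc
  have hI₃ : Integrable ((Ioi δ).indicator (fun u => E * exp (-ρ * u))) :=
    IntegrableOn.integrable_indicator
      ((integrableOn_exp_mul_Ioi (neg_lt_zero.mpr hρ) δ).const_mul E) measurableSet_Ioi
  refine ⟨(hI₁.add hI₂).add hI₃, ?_⟩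
  rw [regimeMajorant, integral_add' (hI₁.add hI₂) hI₃, integral_add' hI₁ hI₂,
    integral_indicator measurableSet_Ioc, integral_indicator measurableSet_Ioc,
    integral_indicator measurableSet_Ioi, integral_Ioc_rpow_neg_half_add, setIntegral_const,
    Real.volume_real_Ioc_of_le hδ, integral_const_mul, integral_exp_mul_Ioi (neg_lt_zero.mpr hρ)]
  field_simp
  ring

theorem setIntegral_Icc_sub_mul_le {T : ℝ} (hT : 0 ≤ T) (hρ : 0 < ρ) (hδ : 1 ≤ δ)
    (hD : ∀ u, 0 ≤ D u) (hsmall : ∀ u ∈ Ioc 0 1, D u ≤ a * u ^ (-(1 : ℝ) / 2) + b)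
    (hlarge : ∀ u ∈ Ioc 1 δ, D u ≤ b') (htail : ∀ u ∈ Ioi δ, D u ≤ E * exp (-ρ * u)) :
    ∫ u in Icc 0 T, (T - u) * D u ≤ T * (2 * a + b + b' * (δ - 1) + E * exp (-ρ * δ) / ρ) := by
  set G := regimeMajorant a b b' E ρ δ
  have hDG : ∀ u, 0 < u → D u ≤ G u := fun u hu => le_regimeMajorant hδ hsmall hlarge htail hu
  have hG : ∀ u, 0 ≤ G u := fun u => (le_or_gt u 0).elim
    (fun hu => (regimeMajorant_eq_zero_of_nonpos (zero_le_one.trans hδ) hu).ge)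
    fun hu => (hD u).trans (hDG u hu)
  obtain ⟨hGint, hGval⟩ : Integrable G ∧ ∫ u, G u = _ :=
    integrable_regimeMajorant_and_integral hρ hδ
  calc ∫ u in Icc 0 T, (T - u) * D u
      = ∫ u in Ioc 0 T, (T - u) * D u := integral_Icc_eq_integral_Ioc
    _ ≤ ∫ u in Ioc 0 T, T * G u := by
        refine integral_mono_of_nonneg
          (ae_restrict_of_forall_mem measurableSet_Ioc fun u hu => ?_) (hGint.const_mul T).restrict
          (ae_restrict_of_forall_mem measurableSet_Ioc fun u hu => ?_)
        · exact mul_nonneg (sub_nonneg.mpr hu.2) (hD u)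
        · calc (T - u) * D u ≤ T * D u :=
                mul_le_mul_of_nonneg_right (by linarith [hu.1]) (hD u)
            _ ≤ T * G u := mul_le_mul_of_nonneg_left (hDG u hu.1) hT
    _ = T * ∫ u in Ioc 0 T, G u := integral_const_mul T _
    _ ≤ T * ∫ u, G u :=
        mul_le_mul_of_nonneg_left (setIntegral_le_integral hGint (ae_of_all _ hG)) hT
    _ = _ := by rw [hGval]

end regimeMajorant

theorem two_mul_setIntegral_Icc_sub_mul_le_log_inv {D : ℝ → ℝ} {T M s a b b' c ρ : ℝ}
    (hT : 0 ≤ T) (hρ : 0 < ρ) (hc : 0 ≤ c) (hs : 0 ≤ s) (hs1 : s < 1) (hD : ∀ u, 0 ≤ D u)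
    (hsmall : ∀ u ∈ Ioc 0 1, D u ≤ (a * u ^ (-(1 : ℝ) / 2) + b) * M ^ 2 * s ^ 2)
    (hlarge : ∀ u, 1 ≤ u → D u ≤ b' * M ^ 2 * s ^ 2)
    (htail : ∀ u, 0 < u → D u ≤ c * M ^ 2 * exp (-ρ * u)) :
    2 * ∫ u in Icc 0 T, (T - u) * D u
      ≤ T * M ^ 2 * s ^ 2 * (4 * a + 2 * b + 2 * c / ρ + 4 * b' / ρ * log (1 / s)) := by
  have hsmall' : ∀ u ∈ Ioc 0 1,
      D u ≤ a * M ^ 2 * s ^ 2 * u ^ (-(1 : ℝ) / 2) + b * M ^ 2 * s ^ 2 :=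
    fun u hu => (hsmall u hu).trans_eq (by ring)
  rcases hs.eq_or_lt with rfl | hspos
  · have key := setIntegral_Icc_sub_mul_le (E := 0) hT hρ le_rfl hD hsmall'
      (fun u hu => hlarge u hu.1.le) fun u hu => (hlarge u (le_of_lt hu)).trans_eq (by ring)
    norm_num at key ⊢
    linarith
  set L := log (1 / s)
  have hL : 0 < L := log_pos (one_lt_one_div hspos hs1)
  have hδ : 1 ≤ 1 + 2 / ρ * L := le_add_of_nonneg_right (by positivity)
  have hexp : exp (-ρ * (1 + 2 / ρ * L)) ≤ s ^ 2 := by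
    have hL' : L = -log s := by simp [L, log_inv]
    calc exp (-ρ * (1 + 2 / ρ * L)) ≤ exp (2 * log s) :=
          exp_le_exp.mpr (by rw [hL']; field_simp; linarith)
      _ = s ^ 2 := by rw [← Nat.cast_ofNat, ← log_pow, exp_log (by positivity)]
  calc 2 * ∫ u in Icc 0 T, (T - u) * D u
      ≤ 2 * (T * (2 * (a * M ^ 2 * s ^ 2) + b * M ^ 2 * s ^ 2
          + b' * M ^ 2 * s ^ 2 * (1 + 2 / ρ * L - 1) + c * M ^ 2 * s ^ 2 / ρ)) := by
        gcongr
        refine (setIntegral_Icc_sub_mul_le hT hρ hδ hD hsmall' (fun u hu => hlarge u hu.1.le)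
          fun u hu => htail u (by linarith [mem_Ioi.mp hu])).trans ?_
        gcongr
    _ = T * M ^ 2 * s ^ 2 * (4 * a + 2 * b + 2 * c / ρ + 4 * b' / ρ * L) := by
        field_simp
        ring

theorem add_mul_le_abs_add_abs_mul {A B L X : ℝ} (hL : 0 ≤ L) (hX : 0 ≤ X) :
    A + B * L ≤ (|A| + |B|) * (1 + X + L) := by
  nlinarith [le_abs_self A, mul_le_mul_of_nonneg_right (le_abs_self B) hL,
    mul_nonneg (abs_nonneg A) hX, mul_nonneg (abs_nonneg A) hL,
    mul_nonneg (abs_nonneg B) hX, abs_nonneg B]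

theorem stmt6_general (α : ℝ) (hα : α ∈ Set.Ioo (0 : ℝ) 2)
    (μ : ℝ → ℝ)
    (hμ_nonneg : ∀ x, 0 ≤ μ x) (Cμ : ℝ) (hμ_bdd : ∀ x, μ x ≤ Cμ)
    (hμ_prob : ∫ x, μ x = 1)
    (P : ℝ → Kernel ℝ ℝ)
    (hP_markov : ∀ u > (0 : ℝ), IsMarkovKernel (P u))
    -- (iii) small-time density bound
    (c₀ lam₀ : ℝ) (hc₀ : 0 < c₀) (hlam₀ : 0 < lam₀)
    (h_dens : ∀ u ∈ Set.Ioc (0 : ℝ) 1, ∀ x : ℝ, ∃ p : ℝ → ℝ,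
      Measurable p ∧
      (∀ y, 0 ≤ p y ∧ p y ≤ c₀ * (u ^ (-(1 : ℝ) / 2) * Real.exp (-lam₀ * |y - x| ^ 2 / u)
        + u / (Real.sqrt u + |y - x|) ^ ((1 : ℝ) + α))) ∧
      (P u) x = volume.withDensity (fun y => ENNReal.ofReal (p y)))
    -- (iv) bounded density for u ≥ 1
    (c₀' : ℝ)
    (h_dens1 : ∀ u : ℝ, 1 ≤ u → ∀ x : ℝ, ∃ p : ℝ → ℝ,
      Measurable p ∧ (∀ y, 0 ≤ p y ∧ p y ≤ c₀') ∧
      (P u) x = volume.withDensity (fun y => ENNReal.ofReal (p y)))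
    -- (v) exponential ergodicity
    (c ρ : ℝ) (hc : 0 < c) (hρ : 0 < ρ)
    (h_erg : ∀ u > (0 : ℝ), ∀ g : ℝ → ℝ, ∀ Mg : ℝ,
      Measurable g → (∀ x, |g x| ≤ Mg) →
      ∫ x, |(∫ y, g y ∂(P u x)) - ∫ z, g z * μ z| * μ x ≤ c * Real.exp (-ρ * u) * Mg) :
    ∃ C : ℝ, ∀ T > (0 : ℝ), ∀ f : ℝ → ℝ, ∀ Mf : ℝ,
      Measurable f → (∀ x, |f x| ≤ Mf) → volume (Function.support f) < 1 →
      2 * (∫ u in Set.Icc 0 T, (T - u) *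
          |(∫ x, (∫ y, f y ∂(P u x)) * f x * μ x) - (∫ x, f x * μ x) ^ 2|)
        ≤ C * T * Mf ^ 2 * (volume (Function.support f)).toReal ^ 2 *
          (1 + Real.log (1 / (volume (Function.support f)).toReal)
                ^ (2 - (1 + α) / 2)
             + Real.log (1 / (volume (Function.support f)).toReal)) := by
  refine ⟨|4 * (2 * c₀ * Cμ) + 2 * Cμ ^ 2 + 2 * c / ρ| + |4 * (c₀' * Cμ + Cμ ^ 2) / ρ|,
    fun T hT f Mf hf hfM hS => ?_⟩
  have hSfin : volume (support f) < ⊤ := hS.trans ENNReal.one_lt_top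
  have hsmall : ∀ u ∈ Ioc 0 1, _ ≤ (2 * c₀ * Cμ * u ^ (-(1 : ℝ) / 2) + Cμ ^ 2) * Mf ^ 2 *
      volume.real (support f) ^ 2 := fun u hu =>
    (abs_integral_integral_mul_sub_sq_le_of_density_le (B := 2 * c₀ * u ^ (-(1 : ℝ) / 2))
      (fun x => by
        obtain ⟨p, hp, hpB, hPx⟩ := h_dens u hu x
        exact ⟨p, hp, fun y => ⟨(hpB y).1, (hpB y).2.trans (gaussian_add_stable_bound_le hu.1
          hu.2 (abs_nonneg _) (by linarith [hα.1]) hα.2.le hc₀.le hlam₀.le)⟩, hPx⟩)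
      hfM hμ_nonneg hμ_bdd hSfin).trans_eq (by ring)
  have htail : ∀ u, 0 < u → _ ≤ c * Mf ^ 2 * exp (-ρ * u) := fun u hu => by
    have := hP_markov u hu
    calc _ ≤ Mf * (c * exp (-ρ * u) * Mf) :=
          (abs_integral_kernel_mul_sub_sq_le hf hfM hμ_nonneg
            (integrable_of_integral_eq_one hμ_prob)).trans
            (mul_le_mul_of_nonneg_left (h_erg u hu f Mf hf hfM) ((abs_nonneg _).trans (hfM 0)))
      _ = c * Mf ^ 2 * exp (-ρ * u) := by ring
  have hs1 : volume.real (support f) < 1 := ENNReal.toReal_lt_of_lt_ofReal (by simpa using hS)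
  have hL : 0 ≤ log (1 / volume.real (support f)) := by
    rw [one_div, log_inv]
    exact neg_nonneg.mpr (log_nonpos measureReal_nonneg hs1.le)
  rw [← measureReal_def]
  refine (two_mul_setIntegral_Icc_sub_mul_le_log_inv hT.le hρ hc.le measureReal_nonneg hs1
    (fun u => abs_nonneg _) hsmall (fun u hu => abs_integral_integral_mul_sub_sq_le_of_density_le
      (h_dens1 u hu) hfM hμ_nonneg hμ_bdd hSfin) htail).trans ?_
  exact (mul_le_mul_of_nonneg_left (add_mul_le_abs_add_abs_mul hL (rpow_nonneg hL _))
    (by positivity)).trans_eq (by ring)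

/-- Variance-covariance bound, case `d = 1`: under invariance,
L²(μ)-contractivity, the two-regime transition-density bounds and exponential
ergodicity, `2∫_0^T (T-u)|⟨P_u f,f⟩_μ - (∫ fμ)²| du
  ≤ C T ‖f‖_∞² |S|² (1 + (log(1/|S|))^{2-(1+α)/2} + log(1/|S|))`
for every bounded measurable `f : ℝ → ℝ` with support of Lebesgue measure `< 1`. -/
theorem stmt6 (α : ℝ) (hα : α ∈ Set.Ioo (0 : ℝ) 2)
    (μ : ℝ → ℝ) (hμ_meas : Measurable μ)
    (hμ_nonneg : ∀ x, 0 ≤ μ x) (Cμ : ℝ) (hμ_bdd : ∀ x, μ x ≤ Cμ)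
    (hμ_prob : ∫ x, μ x = 1)
    (P : ℝ → Kernel ℝ ℝ)
    (hP_markov : ∀ u > (0 : ℝ), IsMarkovKernel (P u))
    -- (i) invariance of μ(x)dx
    (h_inv : ∀ u > (0 : ℝ), ∀ f : ℝ → ℝ, ∀ Mf : ℝ,
      Measurable f → (∀ x, |f x| ≤ Mf) →
      ∫ x, (∫ y, f y ∂(P u x)) * μ x = ∫ x, f x * μ x)
    -- (ii) contraction on L²(μ)
    (h_contr : ∀ u > (0 : ℝ), ∀ f : ℝ → ℝ, Measurable f →
      Integrable (fun x => f x ^ 2 * μ x) →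
      ∫ x, (∫ y, f y ∂(P u x)) ^ 2 * μ x ≤ ∫ x, f x ^ 2 * μ x)
    -- (iii) small-time density bound
    (c₀ lam₀ : ℝ) (hc₀ : 0 < c₀) (hlam₀ : 0 < lam₀)
    (h_dens : ∀ u ∈ Set.Ioc (0 : ℝ) 1, ∀ x : ℝ, ∃ p : ℝ → ℝ,
      Measurable p ∧
      (∀ y, 0 ≤ p y ∧ p y ≤ c₀ * (u ^ (-(1 : ℝ) / 2) * Real.exp (-lam₀ * |y - x| ^ 2 / u)
        + u / (Real.sqrt u + |y - x|) ^ ((1 : ℝ) + α))) ∧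
      (P u) x = volume.withDensity (fun y => ENNReal.ofReal (p y)))
    -- (iv) bounded density for u ≥ 1
    (c₀' : ℝ)
    (h_dens1 : ∀ u : ℝ, 1 ≤ u → ∀ x : ℝ, ∃ p : ℝ → ℝ,
      Measurable p ∧ (∀ y, 0 ≤ p y ∧ p y ≤ c₀') ∧
      (P u) x = volume.withDensity (fun y => ENNReal.ofReal (p y)))
    -- (v) exponential ergodicity
    (c ρ : ℝ) (hc : 0 < c) (hρ : 0 < ρ)
    (h_erg : ∀ u > (0 : ℝ), ∀ g : ℝ → ℝ, ∀ Mg : ℝ,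
      Measurable g → (∀ x, |g x| ≤ Mg) →
      ∫ x, |(∫ y, g y ∂(P u x)) - ∫ z, g z * μ z| * μ x ≤ c * Real.exp (-ρ * u) * Mg) :
    ∃ C : ℝ, ∀ T > (0 : ℝ), ∀ f : ℝ → ℝ, ∀ Mf : ℝ,
      Measurable f → (∀ x, |f x| ≤ Mf) → volume (Function.support f) < 1 →
      2 * (∫ u in Set.Icc 0 T, (T - u) *
          |(∫ x, (∫ y, f y ∂(P u x)) * f x * μ x) - (∫ x, f x * μ x) ^ 2|)
        ≤ C * T * Mf ^ 2 * (volume (Function.support f)).toReal ^ 2 *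
          (1 + Real.log (1 / (volume (Function.support f)).toReal)
                ^ (2 - (1 + α) / 2)
             + Real.log (1 / (volume (Function.support f)).toReal)) :=
  stmt6_general α hα μ hμ_nonneg Cμ hμ_bdd hμ_prob P hP_markov c₀ lam₀ hc₀ hlam₀ h_dens c₀' h_dens1
    c ρ hc hρ h_erg
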